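/- arXiv:math/0503283 — 10 statements merged into one kernel-verified Lean document; each statement's English description precedes it below -/
import Mathlib

section
/- Let f : K → ℝ satisfy f k ≥ 0 for all k ∈ K. Then f is an equilibrium (J_k(f) = 0 for all k) if and only if for all routes k, j with od k = od j, f k > 0 and f j > 0 imply c_k(f) = c_j(f); i.e., all used routes of the same O-D pair share the same travel time. -/
open Finset

/-- Link flow on arc `a` induced by route flows `f`. -/
noncomputable def linkFlow {A K : Type*} [Fintype K] (δ : A → K → ℝ)
    (f : K → ℝ) (a : A) : ℝ :=
  ∑ k, δ a k * f k

/-- Travel time on route `k` induced by route flows `f`. -/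
noncomputable def routeTime {A K : Type*} [Fintype A] [Fintype K] (δ : A → K → ℝ)
    (t : A → ℝ → ℝ) (f : K → ℝ) (k : K) : ℝ :=
  ∑ a, t a (linkFlow δ f a) * δ a k

/-- O-D FIFO violation of route `k` at route-flow state `f`. -/
noncomputable def fifoViolation {A W K : Type*} [Fintype A] [Fintype K] [DecidableEq W]
    (od : K → W) (δ : A → K → ℝ) (t : A → ℝ → ℝ) (f : K → ℝ) (k : K) : ℝ :=
  f k * ∑ j ∈ univ.filter (fun j => od j = od k),
    (routeTime δ t f k - routeTime δ t f j) * f j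

/-! For nonnegative flows, `J_k = f_k · (c_k · d_w - Σ_j c_j f_j)` where `d_w` is the total flow
of the O-D pair `w` of `k`. When `f_k > 0` we also have `d_w > 0`, so `J_k = 0` says exactly that
`c_k` equals the flow-weighted mean travel time of `w`; hence all used routes of `w` share that
time. Conversely, if they do, every summand of `J_k` vanishes. -/

theorem Finset.sum_sub_mul_eq_zero_iff_eq_div {ι : Type*} {s : Finset ι} {w : ι → ℝ}
    (hw : ∑ j ∈ s, w j ≠ 0) (c : ι → ℝ) (x : ℝ) :
    ∑ j ∈ s, (x - c j) * w j = 0 ↔ x = (∑ j ∈ s, c j * w j) / ∑ j ∈ s, w j := by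
  simp only [sub_mul, sum_sub_distrib, ← mul_sum]
  rw [sub_eq_zero, eq_div_iff hw]

theorem Finset.sum_sub_mul_eq_zero_of_eq {ι : Type*} {s : Finset ι} {c w : ι → ℝ} {x : ℝ}
    (h : ∀ j ∈ s, w j ≠ 0 → c j = x) : ∑ j ∈ s, (x - c j) * w j = 0 :=
  sum_eq_zero fun j hj => by
    by_cases hwj : w j = 0
    · rw [hwj, mul_zero]
    · rw [h j hj hwj, sub_self, zero_mul]

section

variable {A W K : Type*} [Fintype A] [Fintype K] [DecidableEq W]
  (od : K → W) (δ : A → K → ℝ) (t : A → ℝ → ℝ) (f : K → ℝ)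

noncomputable def odMeanTime (w : W) : ℝ :=
  (∑ j ∈ univ.filter (fun j => od j = w), routeTime δ t f j * f j) /
    ∑ j ∈ univ.filter (fun j => od j = w), f j

variable {od δ t f}

theorem routeTime_eq_odMeanTime (hf : ∀ k, 0 ≤ f k) {k : K}
    (hJ : fifoViolation od δ t f k = 0) (hk : 0 < f k) :
    routeTime δ t f k = odMeanTime od δ t f (od k) := by
  have hdemand : 0 < ∑ j ∈ univ.filter (fun j => od j = od k), f j :=
    sum_pos' (fun j _ => hf j) ⟨k, by simp, hk⟩
  rw [fifoViolation, mul_eq_zero, or_iff_right hk.ne',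
    sum_sub_mul_eq_zero_iff_eq_div hdemand.ne'] at hJ
  exact hJ

theorem fifoViolation_eq_zero_of_used_routes_eq (hf : ∀ k, 0 ≤ f k) {k : K}
    (h : ∀ j, od k = od j → 0 < f k → 0 < f j → routeTime δ t f k = routeTime δ t f j) :
    fifoViolation od δ t f k = 0 := by
  rcases (hf k).eq_or_lt with hk | hk
  · rw [fifoViolation, ← hk, zero_mul]
  · refine mul_eq_zero_of_right _ (sum_sub_mul_eq_zero_of_eq fun j hj hfj => ?_)
    exact (h j (mem_filter.mp hj).2.symm hk ((hf j).lt_of_ne' hfj)).symm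

end

theorem equilibrium_iff_used_routes_equal_time_general {A W K : Type*} [Fintype A] [Fintype K] [DecidableEq W]
    (od : K → W) (δ : A → K → ℝ)
    (t : A → ℝ → ℝ)
    (f : K → ℝ) (hf : ∀ k, 0 ≤ f k) :
    (∀ k, fifoViolation od δ t f k = 0) ↔
      (∀ k j, od k = od j → 0 < f k → 0 < f j →
        routeTime δ t f k = routeTime δ t f j) := by
  refine ⟨fun hJ k j hod hk hj => ?_, fun h k => fifoViolation_eq_zero_of_used_routes_eq hf (h k)⟩
  rw [routeTime_eq_odMeanTime hf (hJ k) hk, routeTime_eq_odMeanTime hf (hJ j) hj, hod]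

theorem equilibrium_iff_used_routes_equal_time {A W K : Type*} [Fintype A] [Fintype W] [Fintype K] [DecidableEq W]
    (od : K → W) (δ : A → K → ℝ) (hδ : ∀ a k, δ a k = 0 ∨ δ a k = 1)
    (t : A → ℝ → ℝ)
    (f : K → ℝ) (hf : ∀ k, 0 ≤ f k) :
    (∀ k, fifoViolation od δ t f k = 0) ↔
      (∀ k j, od k = od j → 0 < f k → 0 < f j →
        routeTime δ t f k = routeTime δ t f j) :=
  equilibrium_iff_used_routes_equal_time_general od δ t f hf
end

section
/- Suppose f : K → ℝ satisfies f k ≥ 0 for all k and f is a Wardrop user equilibrium state, i.e., there exist numbers v_w (w ∈ W) such that for every route k, f k · (c_k(f) − v_{od k}) = 0 and c_k(f) ≥ v_{od k}. Then f is an equilibrium of the route-choice dynamical system: J_k(f) = 0 for all k ∈ K. -/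
open Finset

/-!
Complementary slackness `f k * (c k - v (od k)) = 0` says that every route carrying flow
costs exactly `v` of its O-D pair. In a term `f k * (c k - c j) * f j` with `od j = od k`,
split `c k - c j = (c k - v) - (c j - v)`: each half is killed by the slackness of `k`
or of `j`.
-/

section ComplementarySlackness

variable {R K W : Type*} [CommRing R] {od : K → W} {c f : K → R} {v : W → R}

theorem mul_sub_mul_eq_zero_of_complementary_slackness
    (hcs : ∀ k, f k * (c k - v (od k)) = 0) {j k : K} (hjk : od j = od k) :
    f k * ((c k - c j) * f j) = 0 := by
  have hcs_j : f j * (c j - v (od k)) = 0 := hjk ▸ hcs j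
  linear_combination f j * hcs k - f k * hcs_j

theorem mul_sum_sub_mul_eq_zero_of_complementary_slackness [Fintype K] [DecidableEq W]
    (hcs : ∀ k, f k * (c k - v (od k)) = 0) (k : K) :
    f k * ∑ j ∈ univ.filter (fun j => od j = od k), (c k - c j) * f j = 0 := by
  rw [mul_sum]
  exact sum_eq_zero fun j hj =>
    mul_sub_mul_eq_zero_of_complementary_slackness hcs (mem_filter.mp hj).2

end ComplementarySlackness

theorem wardrop_ue_is_equilibrium_general {A W K : Type*} [Fintype A] [Fintype K] [DecidableEq W]
    (od : K → W) (δ : A → K → ℝ)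
    (t : A → ℝ → ℝ)
    (f : K → ℝ) (v : W → ℝ)
    (hue₁ : ∀ k, f k * (routeTime δ t f k - v (od k)) = 0) :
    ∀ k, fifoViolation od δ t f k = 0 :=
  mul_sum_sub_mul_eq_zero_of_complementary_slackness hue₁

theorem wardrop_ue_is_equilibrium {A W K : Type*} [Fintype A] [Fintype W] [Fintype K] [DecidableEq W]
    (od : K → W) (δ : A → K → ℝ) (hδ : ∀ a k, δ a k = 0 ∨ δ a k = 1)
    (t : A → ℝ → ℝ)
    (f : K → ℝ) (hf : ∀ k, 0 ≤ f k) (v : W → ℝ)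
    (hue₁ : ∀ k, f k * (routeTime δ t f k - v (od k)) = 0)
    (hue₂ : ∀ k, v (od k) ≤ routeTime δ t f k) :
    ∀ k, fifoViolation od δ t f k = 0 :=
  wardrop_ue_is_equilibrium_general od δ t f v hue₁
end

section
/- Suppose each link performance function t_a is continuous, and let f : [0, T] → (K → ℝ) be a continuously differentiable solution of the route-choice dynamical system f'(τ) k = −J_k(f(τ)). If f(0) k = 0 for some route k ∈ K, then f(τ) k = 0 for all τ ∈ [0, T]; i.e., an initially unused route remains unused. -/
open Finset

/-!
The FIFO violation of route `k` factors as `J_k(f) = B_k(f) · f k`, where `B_k = odCostGap` is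
continuous in `f`, so `τ ↦ f τ k` solves a scalar linear equation `g' = -B_k(f τ) g` whose
coefficient is bounded on the compact interval. Grönwall's inequality with `g 0 = 0` then
forces `g ≡ 0`.
-/

open Set

noncomputable def odCostGap {A W K : Type*} [Fintype A] [Fintype K] [DecidableEq W]
    (od : K → W) (δ : A → K → ℝ) (t : A → ℝ → ℝ) (f : K → ℝ) (k : K) : ℝ :=
  ∑ j ∈ univ.filter (fun j => od j = od k), (routeTime δ t f k - routeTime δ t f j) * f j

theorem fifoViolation_eq_odCostGap_mul {A W K : Type*} [Fintype A] [Fintype K] [DecidableEq W]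
    (od : K → W) (δ : A → K → ℝ) (t : A → ℝ → ℝ) (f : K → ℝ) (k : K) :
    fifoViolation od δ t f k = odCostGap od δ t f k * f k :=
  mul_comm _ _

theorem eq_zero_of_hasDerivWithinAt_smul_self {E : Type*} [NormedAddCommGroup E]
    [NormedSpace ℝ E] {g : ℝ → E} {b : ℝ → ℝ} {l r : ℝ} (hb : ContinuousOn b (Icc l r))
    (hg : ∀ x ∈ Icc l r, HasDerivWithinAt g (b x • g x) (Icc l r) x) (hl : g l = 0) :
    ∀ x ∈ Icc l r, g x = 0 := by
  obtain ⟨C, hC⟩ := isCompact_Icc.exists_bound_of_continuousOn hb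
  refine eq_zero_of_abs_deriv_le_mul_abs_self_of_eq_zero_right (f' := fun x => b x • g x) (K := C)
    (fun x hx => (hg x hx).continuousWithinAt) (fun x hx => ?_) hl (fun x hx => ?_)
  · exact (hg x (Ico_subset_Icc_self hx)).mono_of_mem_nhdsWithin (Icc_mem_nhdsGE_of_mem hx)
  · rw [norm_smul]
    exact mul_le_mul_of_nonneg_right (hC x (Ico_subset_Icc_self hx)) (norm_nonneg _)

section Continuity

variable {A W K : Type*} [Fintype K] (δ : A → K → ℝ) {t : A → ℝ → ℝ}

theorem continuous_linkFlow (a : A) : Continuous fun f : K → ℝ => linkFlow δ f a :=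
  continuous_finsetSum _ fun k _ => continuous_const.mul (continuous_apply k)

theorem continuous_routeTime [Fintype A] (ht : ∀ a, Continuous (t a)) (k : K) :
    Continuous fun f : K → ℝ => routeTime δ t f k :=
  continuous_finsetSum _ fun a _ => ((ht a).comp (continuous_linkFlow δ a)).mul continuous_const

theorem continuous_odCostGap [Fintype A] [DecidableEq W] (od : K → W)
    (ht : ∀ a, Continuous (t a)) (k : K) :
    Continuous fun f : K → ℝ => odCostGap od δ t f k :=
  continuous_finsetSum _ fun j _ =>
    ((continuous_routeTime δ ht k).sub (continuous_routeTime δ ht j)).mul (continuous_apply j)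

end Continuity

theorem unused_route_stays_unused_general {A W K : Type*} [Fintype A] [Fintype K] [DecidableEq W]
    (od : K → W) (δ : A → K → ℝ)
    (t : A → ℝ → ℝ)
    (ht : ∀ a, Continuous (t a)) (T : ℝ) (f : ℝ → K → ℝ)
    (hsol : ∀ τ ∈ Set.Icc (0:ℝ) T,
      HasDerivWithinAt f (fun k => -fifoViolation od δ t (f τ) k) (Set.Icc 0 T) τ)
    (k : K) (h0 : f 0 k = 0) :
    ∀ τ ∈ Set.Icc (0:ℝ) T, f τ k = 0 := by
  have hf : ContinuousOn f (Icc 0 T) := fun τ hτ => (hsol τ hτ).continuousWithinAt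
  have hgap : ContinuousOn (fun τ => -odCostGap od δ t (f τ) k) (Icc 0 T) :=
    ((continuous_odCostGap δ od ht k).comp_continuousOn hf).neg
  refine eq_zero_of_hasDerivWithinAt_smul_self hgap (fun τ hτ => ?_) h0
  have hfk := hasDerivWithinAt_pi.1 (hsol τ hτ) k
  rwa [fifoViolation_eq_odCostGap_mul, ← neg_mul] at hfk

theorem unused_route_stays_unused {A W K : Type*} [Fintype A] [Fintype W] [Fintype K] [DecidableEq W]
    (od : K → W) (δ : A → K → ℝ) (hδ : ∀ a k, δ a k = 0 ∨ δ a k = 1)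
    (t : A → ℝ → ℝ)
    (ht : ∀ a, Continuous (t a)) (T : ℝ) (f : ℝ → K → ℝ)
    (hC1 : ContDiffOn ℝ 1 f (Set.Icc 0 T))
    (hsol : ∀ τ ∈ Set.Icc (0:ℝ) T,
      HasDerivWithinAt f (fun k => -fifoViolation od δ t (f τ) k) (Set.Icc 0 T) τ)
    (k : K) (h0 : f 0 k = 0) :
    ∀ τ ∈ Set.Icc (0:ℝ) T, f τ k = 0 :=
  unused_route_stays_unused_general od δ t ht T f hsol k h0
end

section
/- Along any differentiable solution f : [0, T] → (K → ℝ) of the route-choice dynamical system f'(τ) k = −J_k(f(τ)), the total flow of each O-D pair is conserved: for every w ∈ W and every τ ∈ [0, T], Σ_{k : od k = w} f(τ) k = Σ_{k : od k = w} f(0) k. -/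
open Finset

/-- Antisymmetry: the total FIFO violation over any set vanishes. -/
lemma total_antisym {K : Type*} (S : Finset K) (c f : K → ℝ) :
    ∑ k ∈ S, f k * ∑ j ∈ S, (c k - c j) * f j = 0 := by
  have h : ∀ k ∈ S, f k * ∑ j ∈ S, (c k - c j) * f j
      = ∑ j ∈ S, (c k - c j) * f k * f j := by
    intro k _
    rw [Finset.mul_sum]
    exact Finset.sum_congr rfl fun j _ => by ring
  rw [Finset.sum_congr rfl h]
  have h2 : (∑ k ∈ S, ∑ j ∈ S, (c k - c j) * f k * f j)
      + (∑ k ∈ S, ∑ j ∈ S, (c k - c j) * f k * f j) = 0 := by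
    nth_rewrite 2 [Finset.sum_comm]
    rw [← Finset.sum_add_distrib]
    refine Finset.sum_eq_zero fun k _ => ?_
    rw [← Finset.sum_add_distrib]
    exact Finset.sum_eq_zero fun j _ => by ring
  linarith

theorem od_flow_conserved {A W K : Type*} [Fintype A] [Fintype W] [Fintype K] [DecidableEq W]
    (od : K → W) (δ : A → K → ℝ) (hδ : ∀ a k, δ a k = 0 ∨ δ a k = 1)
    (t : A → ℝ → ℝ)
    (T : ℝ) (f : ℝ → K → ℝ)
    (hsol : ∀ τ ∈ Set.Icc (0:ℝ) T,
      HasDerivWithinAt f (fun k => -fifoViolation od δ t (f τ) k) (Set.Icc 0 T) τ) :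
    ∀ w : W, ∀ τ ∈ Set.Icc (0:ℝ) T,
      ∑ k ∈ univ.filter (fun k => od k = w), f τ k =
      ∑ k ∈ univ.filter (fun k => od k = w), f 0 k := by
  intro w τ hτ
  set S : Finset K := univ.filter (fun k => od k = w) with hS
  set g : ℝ → ℝ := fun σ => ∑ k ∈ S, f σ k with hg
  -- g has derivative 0 within Icc at every point of Icc
  have hderiv : ∀ σ ∈ Set.Icc (0:ℝ) T, HasDerivWithinAt g 0 (Set.Icc 0 T) σ := by
    intro σ hσ
    have h1 : ∀ k : K, HasDerivWithinAt (fun σ => f σ k)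
        (-fifoViolation od δ t (f σ) k) (Set.Icc 0 T) σ := by
      intro k
      exact (hasDerivWithinAt_pi.mp (hsol σ hσ)) k
    have h2 : HasDerivWithinAt g (∑ k ∈ S, -fifoViolation od δ t (f σ) k)
        (Set.Icc 0 T) σ := HasDerivWithinAt.fun_sum fun k _ => h1 k
    have h3 : (∑ k ∈ S, -fifoViolation od δ t (f σ) k) = 0 := by
      rw [Finset.sum_neg_distrib]
      have : ∑ k ∈ S, fifoViolation od δ t (f σ) k
          = ∑ k ∈ S, f σ k * ∑ j ∈ S, (routeTime δ t (f σ) k - routeTime δ t (f σ) j) * f σ j := by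
        refine Finset.sum_congr rfl fun k hk => ?_
        have hkw : od k = w := (Finset.mem_filter.mp hk).2
        unfold fifoViolation
        congr 2
        simp [hS, hkw]
      rw [this, total_antisym]
      simp
    rwa [h3] at h2
  -- g is constant on Icc
  have hcont : ContinuousOn g (Set.Icc 0 T) :=
    fun σ hσ => (hderiv σ hσ).continuousWithinAt
  have hright : ∀ σ ∈ Set.Ico (0:ℝ) T, HasDerivWithinAt g 0 (Set.Ici σ) σ := by
    intro σ hσ
    have hmem : Set.Icc (0:ℝ) T ∈ nhdsWithin σ (Set.Ici σ) := by
      have : Set.Icc σ T ∈ nhdsWithin σ (Set.Ici σ) :=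
        Icc_mem_nhdsGE_of_mem ⟨le_refl σ, hσ.2⟩
      exact Filter.mem_of_superset this (Set.Icc_subset_Icc hσ.1 le_rfl)
    exact (hderiv σ ⟨hσ.1, le_of_lt hσ.2⟩).mono_of_mem_nhdsWithin hmem
  exact constant_of_has_deriv_right_zero hcont hright τ hτ
end

section
/- Suppose each link performance function t_a : ℝ → ℝ is continuous. Then the BMW objective z : (K → ℝ) → ℝ, defined by z(f) = Σ_{a ∈ A} ∫_0^{x_a(f)} t_a(ω) dω, is differentiable at every f, and its partial derivative with respect to the flow on route k equals the travel time on route k: ∂z/∂(f k) (f) = c_k(f). Equivalently, the derivative of z at f is the linear map h ↦ Σ_{k ∈ K} c_k(f) · h k. -/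
open Finset

/-- The BMW objective function. -/
noncomputable def bmw {A K : Type*} [Fintype A] [Fintype K] (δ : A → K → ℝ)
    (t : A → ℝ → ℝ) (f : K → ℝ) : ℝ :=
  ∑ a, ∫ ω in (0:ℝ)..(linkFlow δ f a), t a ω

theorem bmw_hasFDerivAt {A W K : Type*} [Fintype A] [Fintype W] [Fintype K] [DecidableEq W]
    (od : K → W) (δ : A → K → ℝ) (hδ : ∀ a k, δ a k = 0 ∨ δ a k = 1)
    (t : A → ℝ → ℝ)
    (ht : ∀ a, Continuous (t a)) (f : K → ℝ) :
    HasFDerivAt (bmw δ t)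
      (∑ k, routeTime δ t f k • (ContinuousLinearMap.proj k : (K → ℝ) →L[ℝ] ℝ)) f := by
  have h1 : ∀ a : A, HasFDerivAt (fun g : K → ℝ => linkFlow δ g a)
      (∑ k, δ a k • (ContinuousLinearMap.proj k : (K → ℝ) →L[ℝ] ℝ)) f := by
    intro a
    have he : (fun g : K → ℝ => linkFlow δ g a) =
        fun g => (∑ k, δ a k • (ContinuousLinearMap.proj k : (K → ℝ) →L[ℝ] ℝ)) g := by
      funext g
      simp [linkFlow, ContinuousLinearMap.sum_apply]
    rw [he]
    exact (∑ k, δ a k • (ContinuousLinearMap.proj k : (K → ℝ) →L[ℝ] ℝ)).hasFDerivAt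
  have h2 : ∀ a : A, HasFDerivAt (fun g : K → ℝ => ∫ ω in (0:ℝ)..(linkFlow δ g a), t a ω)
      (t a (linkFlow δ f a) • ∑ k, δ a k • (ContinuousLinearMap.proj k : (K → ℝ) →L[ℝ] ℝ)) f := by
    intro a
    have hF : HasDerivAt (fun x : ℝ => ∫ ω in (0:ℝ)..x, t a ω)
        (t a (linkFlow δ f a)) (linkFlow δ f a) :=
      ((ht a).integral_hasStrictDerivAt 0 _).hasDerivAt
    exact hF.comp_hasFDerivAt f (h1 a)
  have hsum : HasFDerivAt (bmw δ t)
      (∑ a, t a (linkFlow δ f a) • ∑ k, δ a k • (ContinuousLinearMap.proj k : (K → ℝ) →L[ℝ] ℝ)) f :=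
    HasFDerivAt.fun_sum (fun a _ => h2 a)
  convert hsum using 1
  simp only [Finset.smul_sum, smul_smul]
  rw [Finset.sum_comm]
  refine Finset.sum_congr rfl fun k _ => ?_
  rw [routeTime, Finset.sum_smul]
end

section
/- Let f : K → ℝ satisfy f k ≥ 0 for all k ∈ K. Then Σ_{(k, j) : od k = od j} (c_k(f) − c_j(f))² · f k · f j = 0 if and only if f is an equilibrium (J_k(f) = 0 for all k ∈ K). -/
/-!
Put `c = routeTime δ t f`. Every term of the dissipation is nonnegative, so the dissipation
vanishes iff `(c k - c j) f k f j = 0` for all same-O-D pairs, which makes every `J_k` vanish.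
Conversely, symmetrising the double sum over the symmetric relation `od j = od k` gives
`∑_{k,j} (c_k - c_j)² f_k f_j = 2 ∑_k c_k J_k`.
-/

open Finset

section SameFiber

variable {K W : Type*} [Fintype K] [DecidableEq W] (od : K → W)

theorem sum_sum_filter_fiber_comm {M : Type*} [AddCommMonoid M] (g : K → K → M) :
    ∑ k, ∑ j ∈ univ.filter (fun j => od j = od k), g k j =
      ∑ k, ∑ j ∈ univ.filter (fun j => od j = od k), g j k :=
  sum_comm' fun k j => by simp [eq_comm]

theorem sum_sum_filter_fiber_sq_sub_mul_mul (c f : K → ℝ) :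
    ∑ k, ∑ j ∈ univ.filter (fun j => od j = od k), (c k - c j) ^ 2 * f k * f j =
      2 * ∑ k, c k * (f k * ∑ j ∈ univ.filter (fun j => od j = od k), (c k - c j) * f j) := by
  set S := ∑ k, c k * (f k * ∑ j ∈ univ.filter (fun j => od j = od k), (c k - c j) * f j)
  have hS : ∑ k, ∑ j ∈ univ.filter (fun j => od j = od k), c k * (c k - c j) * f k * f j = S := by
    refine sum_congr rfl fun k _ => ?_
    rw [mul_sum, mul_sum]
    exact sum_congr rfl fun j _ => by ring
  have hS' : ∑ k, ∑ j ∈ univ.filter (fun j => od j = od k), c j * (c j - c k) * f j * f k = S :=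
    (sum_sum_filter_fiber_comm od _).symm.trans hS
  calc ∑ k, ∑ j ∈ univ.filter (fun j => od j = od k), (c k - c j) ^ 2 * f k * f j
      = ∑ k, ∑ j ∈ univ.filter (fun j => od j = od k),
          (c k * (c k - c j) * f k * f j + c j * (c j - c k) * f j * f k) :=
        sum_congr rfl fun k _ => sum_congr rfl fun j _ => by ring
    _ = 2 * S := by simp only [sum_add_distrib, hS, hS']; ring

theorem sq_sub_mul_mul_eq_zero_of_sum_sum_filter_fiber_eq_zero {c f : K → ℝ} (hf : ∀ k, 0 ≤ f k)
    (h : ∑ k, ∑ j ∈ univ.filter (fun j => od j = od k), (c k - c j) ^ 2 * f k * f j = 0)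
    {k j : K} (hkj : od j = od k) : (c k - c j) ^ 2 * f k * f j = 0 := by
  have hterm : ∀ k j, 0 ≤ (c k - c j) ^ 2 * f k * f j := fun k j => by
    have := hf k; have := hf j; positivity
  have hrow := (sum_eq_zero_iff_of_nonneg fun k _ => sum_nonneg fun j _ => hterm k j).mp h k
    (mem_univ k)
  exact (sum_eq_zero_iff_of_nonneg fun j _ => hterm k j).mp hrow j (by simpa using hkj)

theorem mul_sum_filter_fiber_eq_zero_of_sum_sum_filter_fiber_eq_zero {c f : K → ℝ}
    (hf : ∀ k, 0 ≤ f k)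
    (h : ∑ k, ∑ j ∈ univ.filter (fun j => od j = od k), (c k - c j) ^ 2 * f k * f j = 0) (k : K) :
    f k * ∑ j ∈ univ.filter (fun j => od j = od k), (c k - c j) * f j = 0 := by
  rw [mul_sum]
  refine sum_eq_zero fun j hj => ?_
  have hkj := sq_sub_mul_mul_eq_zero_of_sum_sum_filter_fiber_eq_zero od hf h (mem_filter.mp hj).2
  rcases mul_eq_zero.mp hkj with hck | hfj
  · rcases mul_eq_zero.mp hck with hc | hfk
    · simp [pow_eq_zero_iff two_ne_zero |>.mp hc]
    · simp [hfk]
  · simp [hfj]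

end SameFiber

theorem dissipation_zero_iff_equilibrium_general {A W K : Type*} [Fintype A] [Fintype K] [DecidableEq W]
    (od : K → W) (δ : A → K → ℝ)
    (t : A → ℝ → ℝ)
    (f : K → ℝ) (hf : ∀ k, 0 ≤ f k) :
    (∑ k, ∑ j ∈ univ.filter (fun j => od j = od k),
        (routeTime δ t f k - routeTime δ t f j)^2 * f k * f j = 0) ↔
      (∀ k, fifoViolation od δ t f k = 0) := by
  refine ⟨mul_sum_filter_fiber_eq_zero_of_sum_sum_filter_fiber_eq_zero od hf, fun hJ => ?_⟩
  rw [sum_sum_filter_fiber_sq_sub_mul_mul]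
  exact mul_eq_zero_of_right 2 (sum_eq_zero fun k _ => mul_eq_zero_of_right _ (hJ k))

theorem dissipation_zero_iff_equilibrium {A W K : Type*} [Fintype A] [Fintype W] [Fintype K] [DecidableEq W]
    (od : K → W) (δ : A → K → ℝ) (hδ : ∀ a k, δ a k = 0 ∨ δ a k = 1)
    (t : A → ℝ → ℝ)
    (f : K → ℝ) (hf : ∀ k, 0 ≤ f k) :
    (∑ k, ∑ j ∈ univ.filter (fun j => od j = od k),
        (routeTime δ t f k - routeTime δ t f j)^2 * f k * f j = 0) ↔
      (∀ k, fifoViolation od δ t f k = 0) :=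
  dissipation_zero_iff_equilibrium_general od δ t f hf
end

section
/- Suppose each link performance function t_a is continuous, and let f : [0, T] → (K → ℝ) be a continuously differentiable solution of the route-choice dynamical system f'(τ) k = −J_k(f(τ)) with f(τ) k ≥ 0 for all k and τ. Then for each τ ∈ [0, T], the composite function τ ↦ z(f(τ)) is differentiable with derivative (d/dτ) z(f(τ)) = −(1/2) · Σ_{(k, j) : od k = od j} (c_k(f(τ)) − c_j(f(τ)))² · f(τ) k · f(τ) j ≤ 0; in particular, the BMW objective is nonincreasing along trajectories (it acts as a potential energy of the dynamical system). -/
open Finset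

lemma key_identity {W K : Type*} [Fintype K] [DecidableEq W]
    (od : K → W) (c g : K → ℝ) :
    ∑ k, c k * (g k * ∑ j ∈ univ.filter (fun j => od j = od k), (c k - c j) * g j)
      = (1/2) * ∑ k, ∑ j ∈ univ.filter (fun j => od j = od k),
          (c k - c j)^2 * g k * g j := by
  have swap : ∀ h : K → K → ℝ,
      (∑ k, ∑ j ∈ univ.filter (fun j => od j = od k), h k j)
        = ∑ k, ∑ j ∈ univ.filter (fun j => od j = od k), h j k := by
    intro h
    simp only [sum_filter]
    rw [Finset.sum_comm]
    apply Finset.sum_congr rfl; intro k _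
    apply Finset.sum_congr rfl; intro j _
    by_cases hkj : od k = od j
    · rw [if_pos hkj, if_pos hkj.symm]
    · rw [if_neg hkj, if_neg (fun hh : od j = od k => hkj hh.symm)]
  have expand : ∀ k, c k * (g k * ∑ j ∈ univ.filter (fun j => od j = od k), (c k - c j) * g j)
      = ∑ j ∈ univ.filter (fun j => od j = od k), c k * (c k - c j) * g k * g j := by
    intro k
    rw [Finset.mul_sum, Finset.mul_sum]
    apply Finset.sum_congr rfl; intro j _; ring
  simp only [expand]
  have h2 : ∑ k, ∑ j ∈ univ.filter (fun j => od j = od k), (c k - c j)^2 * g k * g j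
      = (∑ k, ∑ j ∈ univ.filter (fun j => od j = od k), c k * (c k - c j) * g k * g j)
        + ∑ k, ∑ j ∈ univ.filter (fun j => od j = od k), c j * (c j - c k) * g j * g k := by
    rw [← Finset.sum_add_distrib]
    apply Finset.sum_congr rfl; intro k _
    rw [← Finset.sum_add_distrib]
    apply Finset.sum_congr rfl; intro j _; ring
  rw [h2, ← swap (fun k j => c k * (c k - c j) * g k * g j)]
  ring

theorem bmw_nonincreasing_along_trajectories {A W K : Type*} [Fintype A] [Fintype W] [Fintype K] [DecidableEq W]
    (od : K → W) (δ : A → K → ℝ) (hδ : ∀ a k, δ a k = 0 ∨ δ a k = 1)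
    (t : A → ℝ → ℝ)
    (ht : ∀ a, Continuous (t a)) (T : ℝ) (f : ℝ → K → ℝ)
    (hC1 : ContDiffOn ℝ 1 f (Set.Icc 0 T))
    (hsol : ∀ τ ∈ Set.Icc (0:ℝ) T,
      HasDerivWithinAt f (fun k => -fifoViolation od δ t (f τ) k) (Set.Icc 0 T) τ)
    (hnonneg : ∀ τ ∈ Set.Icc (0:ℝ) T, ∀ k, 0 ≤ f τ k) :
    ∀ τ ∈ Set.Icc (0:ℝ) T,
      HasDerivWithinAt (fun σ => bmw δ t (f σ))
        (-(1/2) * ∑ k, ∑ j ∈ univ.filter (fun j => od j = od k),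
          (routeTime δ t (f τ) k - routeTime δ t (f τ) j)^2 * f τ k * f τ j)
        (Set.Icc 0 T) τ ∧
      -(1/2) * (∑ k, ∑ j ∈ univ.filter (fun j => od j = od k),
          (routeTime δ t (f τ) k - routeTime δ t (f τ) j)^2 * f τ k * f τ j) ≤ 0 := by
  intro τ hτ
  have hJ := hsol τ hτ
  have hcoord : ∀ k, HasDerivWithinAt (fun σ => f σ k)
      (-fifoViolation od δ t (f τ) k) (Set.Icc 0 T) τ :=
    fun k => hasDerivWithinAt_pi.mp hJ k
  have hlink : ∀ a, HasDerivWithinAt (fun σ => linkFlow δ (f σ) a)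
      (∑ k, δ a k * (-fifoViolation od δ t (f τ) k)) (Set.Icc 0 T) τ := by
    intro a
    simpa [linkFlow] using
      HasDerivWithinAt.fun_sum (fun k (_ : k ∈ (univ : Finset K)) => (hcoord k).const_mul (δ a k))
  have hterm : ∀ a, HasDerivWithinAt
      (fun σ => ∫ ω in (0:ℝ)..(linkFlow δ (f σ) a), t a ω)
      (t a (linkFlow δ (f τ) a) * ∑ k, δ a k * (-fifoViolation od δ t (f τ) k))
      (Set.Icc 0 T) τ := by
    intro a
    have hF : HasDerivAt (fun u => ∫ ω in (0:ℝ)..u, t a ω)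
        (t a (linkFlow δ (f τ) a)) (linkFlow δ (f τ) a) :=
      ((ht a).integral_hasStrictDerivAt 0 _).hasDerivAt
    exact hF.comp_hasDerivWithinAt τ (hlink a)
  have hsum : HasDerivWithinAt (fun σ => bmw δ t (f σ))
      (∑ a, t a (linkFlow δ (f τ) a) * ∑ k, δ a k * (-fifoViolation od δ t (f τ) k))
      (Set.Icc 0 T) τ := by
    simpa [bmw] using
      HasDerivWithinAt.fun_sum (fun a (_ : a ∈ (univ : Finset A)) => hterm a)
  have heq : (∑ a, t a (linkFlow δ (f τ) a) * ∑ k, δ a k * (-fifoViolation od δ t (f τ) k))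
      = -(1/2) * ∑ k, ∑ j ∈ univ.filter (fun j => od j = od k),
          (routeTime δ t (f τ) k - routeTime δ t (f τ) j)^2 * f τ k * f τ j := by
    have h1 : (∑ a, t a (linkFlow δ (f τ) a) * ∑ k, δ a k * (-fifoViolation od δ t (f τ) k))
        = -∑ k, routeTime δ t (f τ) k * fifoViolation od δ t (f τ) k := by
      simp only [Finset.mul_sum]
      rw [Finset.sum_comm, ← Finset.sum_neg_distrib]
      apply Finset.sum_congr rfl; intro k _
      rw [routeTime, Finset.sum_mul, ← Finset.sum_neg_distrib]
      apply Finset.sum_congr rfl; intro a _; ring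
    rw [h1]
    have h2 := key_identity od (routeTime δ t (f τ)) (f τ)
    simp only [fifoViolation]
    rw [h2]; ring
    -- note: key_identity statement matches after unfolding fifoViolation
  constructor
  · rw [← heq]; exact hsum
  · have hs : 0 ≤ ∑ k, ∑ j ∈ univ.filter (fun j => od j = od k),
        (routeTime δ t (f τ) k - routeTime δ t (f τ) j)^2 * f τ k * f τ j := by
      apply Finset.sum_nonneg; intro k _
      apply Finset.sum_nonneg; intro j _
      have := hnonneg τ hτ k
      have := hnonneg τ hτ j
      positivity
    nlinarith
end

section
/- Suppose each link performance function t_a : ℝ → ℝ is continuous and monotone nondecreasing, and let demands q : W → ℝ be given with q w > 0 for all w, with the feasible set F = {f : K → ℝ | f k ≥ 0 for all k, Σ_{k : od k = w} f k = q w for all w} nonempty. Then the set E of user equilibria, i.e., of minimizers of the BMW objective z over F, is a nonempty, closed and connected subset of K → ℝ. -/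
open Finset

theorem ue_set_nonempty_closed_connected {A W K : Type*} [Fintype A] [Fintype W] [Fintype K] [DecidableEq W]
    (od : K → W) (δ : A → K → ℝ) (hδ : ∀ a k, δ a k = 0 ∨ δ a k = 1)
    (t : A → ℝ → ℝ)
    (ht : ∀ a, Continuous (t a)) (hmono : ∀ a, Monotone (t a))
    (q : W → ℝ) (hq : ∀ w, 0 < q w)
    (hFne : {f : K → ℝ | (∀ k, 0 ≤ f k) ∧
      ∀ w, ∑ k ∈ univ.filter (fun k => od k = w), f k = q w}.Nonempty) :
    ({f : K → ℝ | ((∀ k, 0 ≤ f k) ∧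
        ∀ w, ∑ k ∈ univ.filter (fun k => od k = w), f k = q w) ∧
      ∀ g : K → ℝ, ((∀ k, 0 ≤ g k) ∧
        ∀ w, ∑ k ∈ univ.filter (fun k => od k = w), g k = q w) →
        bmw δ t f ≤ bmw δ t g}.Nonempty ∧
     IsClosed {f : K → ℝ | ((∀ k, 0 ≤ f k) ∧
        ∀ w, ∑ k ∈ univ.filter (fun k => od k = w), f k = q w) ∧
      ∀ g : K → ℝ, ((∀ k, 0 ≤ g k) ∧
        ∀ w, ∑ k ∈ univ.filter (fun k => od k = w), g k = q w) →
        bmw δ t f ≤ bmw δ t g} ∧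
     IsConnected {f : K → ℝ | ((∀ k, 0 ≤ f k) ∧
        ∀ w, ∑ k ∈ univ.filter (fun k => od k = w), f k = q w) ∧
      ∀ g : K → ℝ, ((∀ k, 0 ≤ g k) ∧
        ∀ w, ∑ k ∈ univ.filter (fun k => od k = w), g k = q w) →
        bmw δ t f ≤ bmw δ t g}) := by
  classical
  set F : Set (K → ℝ) := {f : K → ℝ | (∀ k, 0 ≤ f k) ∧
      ∀ w, ∑ k ∈ univ.filter (fun k => od k = w), f k = q w} with hFdef
  have hmemF : ∀ f : K → ℝ, f ∈ F ↔ ((∀ k, 0 ≤ f k) ∧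
      ∀ w, ∑ k ∈ univ.filter (fun k => od k = w), f k = q w) := fun f => Iff.rfl
  -- continuity of bmw
  have hlin : ∀ a : A, Continuous fun f : K → ℝ => linkFlow δ f a := by
    intro a
    unfold linkFlow
    exact continuous_finset_sum _ fun k _ => continuous_const.mul (continuous_apply k)
  have hcont : Continuous (bmw δ t) := by
    unfold bmw
    refine continuous_finset_sum _ fun a _ => ?_
    exact (intervalIntegral.continuous_primitive
      (fun x y => (ht a).intervalIntegrable x y) 0).comp (hlin a)
  -- convexity of each primitive
  have h1 : ∀ a : A, ConvexOn ℝ Set.univ (fun x : ℝ => ∫ ω in (0:ℝ)..x, t a ω) := by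
    intro a
    refine Monotone.convexOn_univ_of_deriv
      (fun x => ((ht a).integral_hasStrictDerivAt 0 x).hasDerivAt.differentiableAt) ?_
    have hd : deriv (fun u : ℝ => ∫ ω in (0:ℝ)..u, t a ω) = t a :=
      funext fun x => Continuous.deriv_integral (t a) (ht a) 0 x
    rw [hd]; exact hmono a
  -- linkFlow as a linear map
  have h2 : ∀ a : A, ConvexOn ℝ Set.univ
      (fun f : K → ℝ => ∫ ω in (0:ℝ)..(linkFlow δ f a), t a ω) := by
    intro a
    set L : (K → ℝ) →ₗ[ℝ] ℝ := ∑ k, δ a k • (LinearMap.proj k : (K → ℝ) →ₗ[ℝ] ℝ) with hL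
    have hLf : ∀ f : K → ℝ, L f = linkFlow δ f a := by
      intro f
      simp [hL, linkFlow, LinearMap.sum_apply, smul_eq_mul]
    have := (h1 a).comp_affineMap L.toAffineMap
    have heq : ((fun x : ℝ => ∫ ω in (0:ℝ)..x, t a ω) ∘ L.toAffineMap)
        = fun f : K → ℝ => ∫ ω in (0:ℝ)..(linkFlow δ f a), t a ω := by
      funext f
      simp [Function.comp, hLf f]
    rw [heq] at this
    simpa using this
  have hconv : ConvexOn ℝ Set.univ (bmw δ t) := by
    unfold bmw
    classical
    have : ∀ s : Finset A, ConvexOn ℝ Set.univ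
        (fun f : K → ℝ => ∑ a ∈ s, ∫ ω in (0:ℝ)..(linkFlow δ f a), t a ω) := by
      intro s
      induction s using Finset.induction with
      | empty => simpa using convexOn_const (0:ℝ) convex_univ
      | insert _ _ hnot ih =>
          simp only [Finset.sum_insert hnot]
          exact (h2 _).add ih
    exact this univ
  -- F is closed
  have hFclosed : IsClosed F := by
    have hset : F = (⋂ k, {f : K → ℝ | 0 ≤ f k}) ∩
        ⋂ w, {f : K → ℝ | ∑ k ∈ univ.filter (fun k => od k = w), f k = q w} := by
      ext f; simp [hFdef, Set.mem_iInter, forall_and]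
    rw [hset]
    exact (isClosed_iInter fun k =>
        isClosed_le continuous_const (continuous_apply k)).inter
      (isClosed_iInter fun w => isClosed_eq
        (continuous_finset_sum _ fun k _ => continuous_apply k) continuous_const)
  -- F is compact
  have hFsub : F ⊆ Set.pi Set.univ fun k => Set.Icc (0:ℝ) (q (od k)) := by
    intro f hf k _
    refine ⟨hf.1 k, ?_⟩
    calc f k ≤ ∑ j ∈ univ.filter (fun j => od j = od k), f j := by
          refine Finset.single_le_sum (fun j _ => hf.1 j) ?_
          simp
      _ = q (od k) := hf.2 (od k)
  have hFcompact : IsCompact F :=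
    (isCompact_univ_pi fun k => isCompact_Icc).of_isClosed_subset hFclosed hFsub
  -- F is convex
  have hFconvex : Convex ℝ F := by
    intro f hf g hg α β hα hβ hαβ
    constructor
    · intro k
      exact add_nonneg (mul_nonneg hα (hf.1 k)) (mul_nonneg hβ (hg.1 k))
    · intro w
      simp only [Pi.add_apply, Pi.smul_apply, smul_eq_mul]
      rw [Finset.sum_add_distrib, ← Finset.mul_sum, ← Finset.mul_sum, hf.2 w, hg.2 w,
        ← add_mul, hαβ, one_mul]
  -- existence of a minimizer
  obtain ⟨f₀, hf₀F, hmin⟩ := hFcompact.exists_isMinOn hFne hcont.continuousOn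
  have hmin' : ∀ g ∈ F, bmw δ t f₀ ≤ bmw δ t g := fun g hg => hmin hg
  refine ⟨⟨f₀, hf₀F, fun g hg => hmin' g hg⟩, ?_, ?_⟩
  · -- closedness
    have hset : {f : K → ℝ | ((∀ k, 0 ≤ f k) ∧
        ∀ w, ∑ k ∈ univ.filter (fun k => od k = w), f k = q w) ∧
      ∀ g : K → ℝ, ((∀ k, 0 ≤ g k) ∧
        ∀ w, ∑ k ∈ univ.filter (fun k => od k = w), g k = q w) →
        bmw δ t f ≤ bmw δ t g} = F ∩ {f : K → ℝ | bmw δ t f ≤ bmw δ t f₀} := by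
      ext f
      constructor
      · rintro ⟨hfF, hle⟩
        exact ⟨hfF, hle f₀ hf₀F⟩
      · rintro ⟨hfF, hle⟩
        exact ⟨hfF, fun g hg => hle.trans (hmin' g hg)⟩
    rw [hset]
    exact hFclosed.inter (isClosed_le hcont continuous_const)
  · -- connectedness
    have hEconvex : Convex ℝ {f : K → ℝ | ((∀ k, 0 ≤ f k) ∧
        ∀ w, ∑ k ∈ univ.filter (fun k => od k = w), f k = q w) ∧
      ∀ g : K → ℝ, ((∀ k, 0 ≤ g k) ∧
        ∀ w, ∑ k ∈ univ.filter (fun k => od k = w), g k = q w) →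
        bmw δ t f ≤ bmw δ t g} := by
      rintro f ⟨hfF, hfmin⟩ g ⟨hgF, hgmin⟩ α β hα hβ hαβ
      refine ⟨hFconvex hfF hgF hα hβ hαβ, fun g' hg' => ?_⟩
      calc bmw δ t (α • f + β • g)
          ≤ α * bmw δ t f + β * bmw δ t g :=
            hconv.2 (Set.mem_univ f) (Set.mem_univ g) hα hβ hαβ
        _ ≤ α * bmw δ t g' + β * bmw δ t g' := by
            gcongr
            · exact hfmin g' hg'
            · exact hgmin g' hg'
        _ = bmw δ t g' := by rw [← add_mul, hαβ, one_mul]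
    exact hEconvex.isConnected ⟨f₀, hf₀F, fun g hg => hmin' g hg⟩
end

section
/- Variable-demand dissipation identity: for any f : K → ℝ with f k ≥ 0 for all k, any q : W → ℝ with q w ≥ 0, and any w ∈ W with Σ_{k : od k = w} f k = q w, one has Σ_{k : od k = w} c_k(f) · F_k(f, q) − u_w(q w) · G_w(f, q) = −q w · Σ_{k : od k = w} f k · (c_k(f) − u_w(q w))² ≤ 0; i.e., the derivative of the variable-demand BMW objective z(f, q) = Σ_a ∫_0^{x_a(f)} t_a(ω) dω − Σ_w ∫_0^{q w} u_w(ω) dω along the variable-demand dynamics is nonpositive, so z is a potential energy of the variable-demand dynamical system. -/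
open Finset

/-- Right-hand side for route flows in the variable-demand dynamical system. -/
noncomputable def Fvar {A W K : Type*} [Fintype A] [Fintype K]
    (od : K → W) (δ : A → K → ℝ) (t : A → ℝ → ℝ) (u : W → ℝ → ℝ)
    (f : K → ℝ) (q : W → ℝ) (k : K) : ℝ :=
  -(q (od k) * f k * (routeTime δ t f k - u (od k) (q (od k))))

/-- Right-hand side for demands in the variable-demand dynamical system. -/
noncomputable def Gvar {A W K : Type*} [Fintype A] [Fintype K] [DecidableEq W]
    (od : K → W) (δ : A → K → ℝ) (t : A → ℝ → ℝ) (u : W → ℝ → ℝ)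
    (f : K → ℝ) (q : W → ℝ) (w : W) : ℝ :=
  -(q w * ((∑ k ∈ univ.filter (fun k => od k = w), f k * routeTime δ t f k)
      - q w * u w (q w)))

/-! Conservation `∑_{od k = w} f k = q w` turns `G_w` into `-q_w ∑ f_k (c_k - u_w)`, so
`∑ c_k F_k - u_w G_w = -q_w (∑ f_k c_k (c_k - u_w) - u_w ∑ f_k (c_k - u_w)) = -q_w ∑ f_k (c_k - u_w)²`,
which is nonpositive because flows and demands are nonnegative. -/

theorem Finset.sum_mul_sub_sq_eq {ι : Type*} (s : Finset ι) (f c : ι → ℝ) (U : ℝ) :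
    ∑ k ∈ s, f k * (c k - U) ^ 2 =
      ∑ k ∈ s, f k * c k * (c k - U) - U * ∑ k ∈ s, f k * (c k - U) := by
  rw [Finset.mul_sum, ← Finset.sum_sub_distrib]
  exact Finset.sum_congr rfl fun k _ => by ring

section VariableDemand

variable {A W K : Type*} [Fintype A] [Fintype K] [DecidableEq W]
  (od : K → W) (δ : A → K → ℝ) (t : A → ℝ → ℝ) (u : W → ℝ → ℝ) (f : K → ℝ) (q : W → ℝ) (w : W)

theorem sum_routeTime_mul_Fvar :
    ∑ k ∈ univ.filter (fun k => od k = w), routeTime δ t f k * Fvar od δ t u f q k =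
      -(q w * ∑ k ∈ univ.filter (fun k => od k = w),
          f k * routeTime δ t f k * (routeTime δ t f k - u w (q w))) := by
  rw [Finset.mul_sum, ← Finset.sum_neg_distrib]
  refine Finset.sum_congr rfl fun k hk => ?_
  simp only [Fvar, (Finset.mem_filter.mp hk).2]
  ring

theorem Gvar_eq_of_sum_eq (hcons : ∑ k ∈ univ.filter (fun k => od k = w), f k = q w) :
    Gvar od δ t u f q w =
      -(q w * ∑ k ∈ univ.filter (fun k => od k = w), f k * (routeTime δ t f k - u w (q w))) := by
  simp only [Gvar, mul_sub, Finset.sum_sub_distrib, ← Finset.sum_mul, hcons]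

theorem sum_routeTime_mul_Fvar_sub_mul_Gvar
    (hcons : ∑ k ∈ univ.filter (fun k => od k = w), f k = q w) :
    (∑ k ∈ univ.filter (fun k => od k = w), routeTime δ t f k * Fvar od δ t u f q k)
        - u w (q w) * Gvar od δ t u f q w =
      -(q w * ∑ k ∈ univ.filter (fun k => od k = w),
          f k * (routeTime δ t f k - u w (q w)) ^ 2) := by
  rw [sum_routeTime_mul_Fvar, Gvar_eq_of_sum_eq od δ t u f q w hcons, Finset.sum_mul_sub_sq_eq]
  ring

end VariableDemand

theorem variable_demand_dissipation_general {A W K : Type*} [Fintype A] [Fintype K] [DecidableEq W]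
    (od : K → W) (δ : A → K → ℝ) (t : A → ℝ → ℝ)
    (u : W → ℝ → ℝ) (f : K → ℝ) (hf : ∀ k, 0 ≤ f k)
    (q : W → ℝ) (hq : ∀ w, 0 ≤ q w) (w : W)
    (hcons : ∑ k ∈ univ.filter (fun k => od k = w), f k = q w) :
    (∑ k ∈ univ.filter (fun k => od k = w), routeTime δ t f k * Fvar od δ t u f q k)
        - u w (q w) * Gvar od δ t u f q w =
      -(q w * ∑ k ∈ univ.filter (fun k => od k = w),
          f k * (routeTime δ t f k - u w (q w))^2) ∧
    (∑ k ∈ univ.filter (fun k => od k = w), routeTime δ t f k * Fvar od δ t u f q k)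
        - u w (q w) * Gvar od δ t u f q w ≤ 0 := by
  have hdiss := sum_routeTime_mul_Fvar_sub_mul_Gvar od δ t u f q w hcons
  refine ⟨hdiss, hdiss ▸ ?_⟩
  exact neg_nonpos.mpr <| mul_nonneg (hq w) <|
    Finset.sum_nonneg fun k _ => mul_nonneg (hf k) (sq_nonneg _)

theorem variable_demand_dissipation {A W K : Type*} [Fintype A] [Fintype W] [Fintype K] [DecidableEq W]
    (od : K → W) (δ : A → K → ℝ) (hδ : ∀ a k, δ a k = 0 ∨ δ a k = 1)
    (t : A → ℝ → ℝ)
    (u : W → ℝ → ℝ) (f : K → ℝ) (hf : ∀ k, 0 ≤ f k)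
    (q : W → ℝ) (hq : ∀ w, 0 ≤ q w) (w : W)
    (hcons : ∑ k ∈ univ.filter (fun k => od k = w), f k = q w) :
    (∑ k ∈ univ.filter (fun k => od k = w), routeTime δ t f k * Fvar od δ t u f q k)
        - u w (q w) * Gvar od δ t u f q w =
      -(q w * ∑ k ∈ univ.filter (fun k => od k = w),
          f k * (routeTime δ t f k - u w (q w))^2) ∧
    (∑ k ∈ univ.filter (fun k => od k = w), routeTime δ t f k * Fvar od δ t u f q k)
        - u w (q w) * Gvar od δ t u f q w ≤ 0 :=
  variable_demand_dissipation_general od δ t u f hf q hq w hcons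
end

section
/- Characterization of variable-demand equilibria: let f : K → ℝ with f k ≥ 0 for all k and q : W → ℝ with q w > 0 and Σ_{k : od k = w} f k = q w for all w. Then (f, q) is an equilibrium of the variable-demand dynamical system (F_k(f, q) = 0 for all k and G_w(f, q) = 0 for all w) if and only if for every route k with f k > 0 one has c_k(f) = u_{od k}(q_{od k}); i.e., every used route's travel time equals the inverse-demand travel time of its O-D pair. -/
open Finset

/-!
Since `q > 0`, the route equation `F_k = 0` says exactly that a used route costs the inverse
demand of its O-D pair. Multiplying these equations by `q_w` and summing over the routes of `w`,
flow conservation `∑ f_k = q_w` turns them into the demand equation `G_w = 0`, which is therefore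
redundant.
-/

section VariableDemand

variable {A W K : Type*} [Fintype A] [Fintype K]
  {od : K → W} {δ : A → K → ℝ} {t : A → ℝ → ℝ} {u : W → ℝ → ℝ} {f : K → ℝ} {q : W → ℝ}

theorem Fvar_eq_zero_iff {k : K} (hq : q (od k) ≠ 0) :
    Fvar od δ t u f q k = 0 ↔ (f k ≠ 0 → routeTime δ t f k = u (od k) (q (od k))) := by
  rw [Fvar, neg_eq_zero, mul_eq_zero, mul_eq_zero, or_iff_right hq, sub_eq_zero,
    or_iff_not_imp_left]

theorem Gvar_eq_zero_of_forall_Fvar_eq_zero [DecidableEq W] {w : W}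
    (hF : ∀ k, Fvar od δ t u f q k = 0)
    (hcons : ∑ k ∈ univ.filter (fun k => od k = w), f k = q w) :
    Gvar od δ t u f q w = 0 := by
  have hroute : ∀ k ∈ univ.filter (fun k => od k = w),
      q w * (f k * routeTime δ t f k) = q w * (f k * u w (q w)) := by
    intro k hk
    obtain rfl := (mem_filter.1 hk).2
    have hFk := hF k
    rw [Fvar] at hFk
    linear_combination -hFk
  rw [Gvar, mul_sub, mul_sum, sum_congr rfl hroute, ← mul_sum, ← sum_mul, hcons]
  ring

end VariableDemand

theorem variable_demand_equilibrium_iff_general {A W K : Type*} [Fintype A] [Fintype K] [DecidableEq W]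
    (od : K → W) (δ : A → K → ℝ)
    (t : A → ℝ → ℝ)
    (u : W → ℝ → ℝ) (f : K → ℝ) (hf : ∀ k, 0 ≤ f k)
    (q : W → ℝ) (hq : ∀ w, 0 < q w)
    (hcons : ∀ w, ∑ k ∈ univ.filter (fun k => od k = w), f k = q w) :
    ((∀ k, Fvar od δ t u f q k = 0) ∧ (∀ w, Gvar od δ t u f q w = 0)) ↔
      (∀ k, 0 < f k → routeTime δ t f k = u (od k) (q (od k))) := by
  have hF_iff : (∀ k, Fvar od δ t u f q k = 0) ↔
      ∀ k, 0 < f k → routeTime δ t f k = u (od k) (q (od k)) :=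
    forall_congr' fun k => by rw [Fvar_eq_zero_iff (hq (od k)).ne', (hf k).lt_iff_ne']
  rw [← hF_iff]
  exact ⟨And.left, fun hF => ⟨hF, fun w => Gvar_eq_zero_of_forall_Fvar_eq_zero hF (hcons w)⟩⟩

theorem variable_demand_equilibrium_iff {A W K : Type*} [Fintype A] [Fintype W] [Fintype K] [DecidableEq W]
    (od : K → W) (δ : A → K → ℝ) (hδ : ∀ a k, δ a k = 0 ∨ δ a k = 1)
    (t : A → ℝ → ℝ)
    (u : W → ℝ → ℝ) (f : K → ℝ) (hf : ∀ k, 0 ≤ f k)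
    (q : W → ℝ) (hq : ∀ w, 0 < q w)
    (hcons : ∀ w, ∑ k ∈ univ.filter (fun k => od k = w), f k = q w) :
    ((∀ k, Fvar od δ t u f q k = 0) ∧ (∀ w, Gvar od δ t u f q w = 0)) ↔
      (∀ k, 0 < f k → routeTime δ t f k = u (od k) (q (od k))) :=
  variable_demand_equilibrium_iff_general od δ t u f hf q hq hcons
end
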